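/- Suppose the sequence (T_n) satisfies hypotheses (NU1)–(NU5) of the nonstationary nonuniformly expanding setup, fix K_1, K_2 as in the regularity definition, set C_h = 2 e^{K_2 diam X}, h_n^k(ℓ) = C_h (h^k(n+ℓ) + h^{k+1}(n+ℓ−1) + ⋯ + h^{k+n}(ℓ)) with h^j(m) = m_j(τ_j ≥ m), and let θ ∈ (0,1) be the constant from the one-step decomposition (depending only on K_1, K_2, diam X, δ_0). Let k ≥ 1 and suppose μ is a regular probability measure with tail bound r with respect to T_k, T_{k+1}, …, where r is nonincreasing, r(1) = 1 and lim_{n→∞} r(n) = 0. Then μ = Σ_{j=n_0+1}^∞ α_j [θ μ_j + (1−θ) μ_j'], where α_j = r(j−n_0) − r(j+1−n_0), and μ_j, μ_j' are probability measures such that (T_{k,k+j-1})_* μ_j = m_{k+j} and (T_{k,k+j-1})_* μ_j' is regular with tail bound h_j^k with respect to T_{k+j}, T_{k+j+1}, …. -/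

import Mathlib

open MeasureTheory Set Filter
open scoped NNReal ENNReal

noncomputable section

/-- `seqComp T k n = T (k+n-1) ∘ ⋯ ∘ T (k+1) ∘ T k`, i.e. the composition `T_{k,k+n-1}`. -/
def seqComp {α : Type*} (T : ℕ → α → α) (k : ℕ) : ℕ → α → α
  | 0 => id
  | n + 1 => fun x => T (k + n) (seqComp T k n x)

/-- First return time: `τ_k(x) = inf {n ≥ 1 : T_{k,k+n-1}(x) ∈ Y_{k+n}}`. -/
def retTime {α : Type*} (T : ℕ → α → α) (Y : ℕ → Set α) (k : ℕ) (x : α) : ℕ :=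
  sInf {n | 1 ≤ n ∧ seqComp T k n x ∈ Y (k + n)}

/-- `|μ|_{LL} ≤ c`: the measure `μ` has a density `ρ` with respect to `m` whose logarithm is
`c`-Lipschitz on `Y` (equivalently, `ρ y ≤ ρ y' · exp (c · d(y,y'))` for all `y, y' ∈ Y`, which
also correctly encodes the conventions `log 0 = -∞` and `log 0 - log 0 = 0`). -/
def LLBoundedBy {X : Type*} [MetricSpace X] [MeasurableSpace X]
    (m : Measure X) (Y : Set X) (μ : Measure X) (c : ℝ) : Prop :=
  ∃ ρ : X → ℝ, (∀ x, 0 ≤ ρ x) ∧ Measurable ρ ∧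
    μ = m.withDensity (fun x => ENNReal.ofReal (ρ x)) ∧
    ∀ y ∈ Y, ∀ y' ∈ Y, ρ y ≤ ρ y' * Real.exp (c * dist y y')

/-- Nonstationary nonuniformly expanding setup: hypotheses (NU1)–(NU4).
All data is indexed by `k ≥ 1`; the values at `k = 0` are irrelevant. -/
structure NUE (X : Type*) [MetricSpace X] [MeasurableSpace X] [BorelSpace X] where
  /-- the expansion constant `λ > 1` -/
  lam : ℝ
  /-- the distortion constant `K > 0` -/
  K : ℝ
  hlam : 1 < lam
  hK : 0 < K
  /-- `X` is a bounded metric space -/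
  bounded : Bornology.IsBounded (univ : Set X)
  /-- the reference sets `Y k` -/
  Y : ℕ → Set X
  Ymeas : ∀ k, MeasurableSet (Y k)
  /-- the reference probability measures `m k`, with `m k (Y k) = 1` -/
  m : ℕ → Measure X
  mprob : ∀ k, IsProbabilityMeasure (m k)
  mY : ∀ k, 1 ≤ k → m k (Y k) = 1
  /-- the maps `T k` -/
  T : ℕ → X → X
  Tmeas : ∀ k, Measurable (T k)
  /-- the partitions `P k` of `X` -/
  P : ℕ → Set (Set X)
  Pcount : ∀ k, (P k).Countable
  Pmeas : ∀ k, ∀ a ∈ P k, MeasurableSet a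
  Pdisj : ∀ k, (P k).PairwiseDisjoint id
  Pcover : ∀ k, 1 ≤ k → ⋃₀ P k = univ
  /-- `Y k` is `P k`-measurable -/
  PY : ∀ k, 1 ≤ k → ∃ S ⊆ P k, Y k = ⋃₀ S
  /-- the return times take values in `{1, 2, …}` (finite returns) -/
  retFin : ∀ k, 1 ≤ k → ∀ x : X, 1 ≤ retTime T Y k x ∧
    seqComp T k (retTime T Y k x) x ∈ Y (k + retTime T Y k x)
  /-- (NU1) -/
  nu1 : ∀ k, 1 ≤ k → ∀ a ∈ P k, a ⊆ Y k → 0 < m k a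
  /-- (NU2) τ_k is constant on partition elements -/
  nu2 : ∀ k, 1 ≤ k → ∀ a ∈ P k, ∀ x ∈ a, ∀ x' ∈ a, retTime T Y k x = retTime T Y k x'
  /-- (NU3) the first return maps are expanding bijections with log-Lipschitz Jacobians -/
  nu3 : ∀ k, 1 ≤ k → ∀ a ∈ P k, a ⊆ Y k → ∀ n, (∀ x ∈ a, retTime T Y k x = n) →
    Set.BijOn (seqComp T k n) a (Y (k + n)) ∧
    (∀ y ∈ a, ∀ y' ∈ a, lam * dist y y' ≤ dist (seqComp T k n y) (seqComp T k n y')) ∧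
    LLBoundedBy (m (k + n)) (Y (k + n)) (Measure.map (seqComp T k n) ((m k).restrict a)) K
  /-- (NU4) bounded backward expansion -/
  nu4 : ∀ k, 1 ≤ k → ∀ a ∈ P k, ∀ n, (∀ x ∈ a, retTime T Y k x = n) →
    ∀ x ∈ a, ∀ x' ∈ a, ∀ j ≤ n,
      dist (seqComp T k j x) (seqComp T k j x') ≤
        K * dist (seqComp T k n x) (seqComp T k n x')

namespace NUE

variable {X : Type*} [MetricSpace X] [MeasurableSpace X] [BorelSpace X]

/-- the return time `τ_k` -/
def tau (S : NUE X) : ℕ → X → ℕ := retTime S.T S.Y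

/-- (NU5): `((T_{k,k+n-1})_* m_k)(Y_{k+n}) ≥ δ₀` for all `k ≥ 1` and `n ≥ n₀`. -/
def nu5 (S : NUE X) (δ₀ : ℝ) (n₀ : ℕ) : Prop :=
  ∀ k, 1 ≤ k → ∀ n, n₀ ≤ n →
    ENNReal.ofReal δ₀ ≤ Measure.map (seqComp S.T k n) (S.m k) (S.Y (k + n))

/-- `μ` is regular with respect to `T_k, T_{k+1}, …` (with constant `K₁`). -/
def Regular (S : NUE X) (K₁ : ℝ) (k : ℕ) (μ : Measure X) : Prop :=
  ∀ l, 1 ≤ l →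
    LLBoundedBy (S.m (k + l)) (S.Y (k + l))
      (Measure.map (seqComp S.T k l) (μ.restrict {x | S.tau k x = l})) K₁

/-- `μ` has tail bound `r` with respect to `T_k, T_{k+1}, …`. -/
def TailBound (S : NUE X) (k : ℕ) (μ : Measure X) (r : ℕ → ℝ) : Prop :=
  ∀ n : ℕ, μ {x | n ≤ S.tau k x} ≤ ENNReal.ofReal (r n)

/-- the tail function `h^k(n) = m_k(τ_k ≥ n)`. -/
def hTail (S : NUE X) (k n : ℕ) : ℝ := (S.m k {x | n ≤ S.tau k x}).toReal

/-- `h_n^k(ℓ) = C_h (h^k(n+ℓ) + h^{k+1}(n+ℓ-1) + ⋯ + h^{k+n}(ℓ))`. -/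
def hnk (S : NUE X) (Ch : ℝ) (k n l : ℕ) : ℝ :=
  Ch * ∑ i ∈ Finset.range (n + 1), S.hTail (k + i) (n + l - i)

end NUE


section AuxHelpers

lemma seqComp_measurable {X : Type*} [MeasurableSpace X] {T : ℕ → X → X}
    (hT : ∀ k, Measurable (T k)) (k n : ℕ) : Measurable (seqComp T k n) := by
  induction n with
  | zero => exact measurable_id
  | succ n ih => exact (hT _).comp ih

lemma seqComp_add {α : Type*} (T : ℕ → α → α) (k a b : ℕ) :
    seqComp T k (a + b) = (seqComp T (k + a) b) ∘ (seqComp T k a) := by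
  induction b with
  | zero => rfl
  | succ b ih =>
    funext x
    show T (k + (a + b)) (seqComp T k (a + b) x)
      = T (k + a + b) (seqComp T (k + a) b (seqComp T k a x))
    rw [ih, add_assoc]
    rfl

lemma clip_step {A B b c : ℝ} (hAB : B ≤ A) :
    max (min A b - max B c) 0 = max (min A b) c - max (min B b) c := by
  simp only [max_def, min_def]
  split_ifs <;> linarith

lemma clip_sum {u : ℕ → ℝ} (hu : ∀ ℓ, u (ℓ + 1) ≤ u ℓ) (b c : ℝ) (L : ℕ) :
    ∑ i ∈ Finset.range L, max (min (u (i + 1)) b - max (u (i + 2)) c) 0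
      = max (min (u 1) b) c - max (min (u (L + 1)) b) c := by
  have h : ∀ i ∈ Finset.range L, max (min (u (i + 1)) b - max (u (i + 2)) c) 0
      = max (min (u (i + 1)) b) c - max (min (u (i + 2)) b) c := fun i _ => clip_step (hu (i + 1))
  rw [Finset.sum_congr rfl h]
  exact Finset.sum_range_sub' (fun i => max (min (u (i + 1)) b) c) L

variable {X : Type*} [MetricSpace X] [MeasurableSpace X] {m : Measure X} {Y : Set X}

lemma LLBoundedBy.mono {μ : Measure X} {c c' : ℝ} (h : LLBoundedBy m Y μ c) (hc : c ≤ c') :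
    LLBoundedBy m Y μ c' := by
  obtain ⟨ρ, h0, hm, he, hi⟩ := h
  refine ⟨ρ, h0, hm, he, fun y hy y' hy' => (hi y hy y' hy').trans ?_⟩
  exact mul_le_mul_of_nonneg_left
    (Real.exp_le_exp.mpr (mul_le_mul_of_nonneg_right hc dist_nonneg)) (h0 y')

lemma LLBoundedBy.zero_meas {c : ℝ} : LLBoundedBy m Y (0 : Measure X) c :=
  ⟨fun _ => 0, fun _ => le_rfl, measurable_const, by simp, fun y _ y' _ => by simp⟩

lemma LLBoundedBy.add {μ₁ μ₂ : Measure X} {c : ℝ} (h1 : LLBoundedBy m Y μ₁ c)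
    (h2 : LLBoundedBy m Y μ₂ c) : LLBoundedBy m Y (μ₁ + μ₂) c := by
  obtain ⟨ρ₁, h01, hm1, he1, hi1⟩ := h1
  obtain ⟨ρ₂, h02, hm2, he2, hi2⟩ := h2
  refine ⟨fun x => ρ₁ x + ρ₂ x, fun x => add_nonneg (h01 x) (h02 x), hm1.add hm2, ?_, ?_⟩
  · have : (fun x => ENNReal.ofReal (ρ₁ x + ρ₂ x))
        = (fun x => ENNReal.ofReal (ρ₁ x)) + (fun x => ENNReal.ofReal (ρ₂ x)) := by
      funext x; simp [ENNReal.ofReal_add (h01 x) (h02 x)]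
    rw [he1, he2, this, withDensity_add_left hm1.ennreal_ofReal]
  · intro y hy y' hy'
    have := add_le_add (hi1 y hy y' hy') (hi2 y hy y' hy')
    simpa [add_mul] using this

lemma LLBoundedBy.smul {μ : Measure X} {c : ℝ} (h : LLBoundedBy m Y μ c) (w : ℝ≥0∞)
    (hw : w ≠ ∞) : LLBoundedBy m Y (w • μ) c := by
  obtain ⟨ρ, h0, hm, he, hi⟩ := h
  refine ⟨fun x => w.toReal * ρ x, fun x => mul_nonneg ENNReal.toReal_nonneg (h0 x),
    (measurable_const.mul hm), ?_, ?_⟩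
  · have : (fun x => ENNReal.ofReal (w.toReal * ρ x)) = w • fun x => ENNReal.ofReal (ρ x) := by
      funext x
      simp only [Pi.smul_apply, smul_eq_mul]
      rw [ENNReal.ofReal_mul ENNReal.toReal_nonneg, ENNReal.ofReal_toReal hw]
    rw [he, this, withDensity_smul _ hm.ennreal_ofReal]
  · intro y hy y' hy'
    have := mul_le_mul_of_nonneg_left (hi y hy y' hy') (ENNReal.toReal_nonneg (a := w))
    calc w.toReal * ρ y ≤ w.toReal * (ρ y' * Real.exp (c * dist y y')) := this
      _ = w.toReal * ρ y' * Real.exp (c * dist y y') := by ring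

lemma LLBoundedBy.finsetSum {ι : Type*} {c : ℝ} (s : Finset ι) (w : ι → ℝ≥0∞)
    (μs : ι → Measure X) (hw : ∀ i ∈ s, w i ≠ ∞) (h : ∀ i ∈ s, LLBoundedBy m Y (μs i) c) :
    LLBoundedBy m Y (∑ i ∈ s, w i • μs i) c := by
  induction s using Finset.cons_induction with
  | empty => simpa using LLBoundedBy.zero_meas
  | cons a t ha ih =>
    rw [Finset.sum_cons]
    exact ((h a (Finset.mem_cons_self a t)).smul _ (hw a (Finset.mem_cons_self a t))).add
      (ih (fun i hi => hw i (Finset.mem_cons_of_mem hi))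
        (fun i hi => h i (Finset.mem_cons_of_mem hi)))

lemma map_finsetSum_smul {ι : Type*} {f : X → X} (hf : Measurable f) (s : Finset ι)
    (w : ι → ℝ≥0∞) (μs : ι → Measure X) :
    Measure.map f (∑ i ∈ s, w i • μs i) = ∑ i ∈ s, w i • Measure.map f (μs i) := by
  induction s using Finset.cons_induction with
  | empty => simp
  | cons a t ha ih =>
    rw [Finset.sum_cons, Finset.sum_cons, Measure.map_add _ _ hf, Measure.map_smul, ih]

lemma restrict_finsetSum_smul {ι : Type*} (s : Finset ι) (w : ι → ℝ≥0∞) (μs : ι → Measure X)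
    (t : Set X) :
    (∑ i ∈ s, w i • μs i).restrict t = ∑ i ∈ s, w i • (μs i).restrict t := by
  induction s using Finset.cons_induction with
  | empty => simp
  | cons a u ha ih =>
    rw [Finset.sum_cons, Finset.sum_cons, Measure.restrict_add, Measure.restrict_smul, ih]

-- the pullback split lemma
lemma split_component {f : X → X} (hf : Measurable f)
    (P m' ν' : Measure X) [IsProbabilityMeasure P] [IsProbabilityMeasure m']
    [IsProbabilityMeasure ν'] {θ : ℝ} (hθ0 : 0 < θ) (hθ1 : θ < 1)
    (h : Measure.map f P = ENNReal.ofReal θ • m' + ENNReal.ofReal (1 - θ) • ν') :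
    ∃ N N' : Measure X, IsProbabilityMeasure N ∧ IsProbabilityMeasure N' ∧
      Measure.map f N = m' ∧ Measure.map f N' = ν' ∧
      ENNReal.ofReal θ • N + ENNReal.ofReal (1 - θ) • N' = P := by
  have hcθ0 : ENNReal.ofReal θ ≠ 0 := by simp [ENNReal.ofReal_eq_zero, not_le, hθ0]
  have hcθt : ENNReal.ofReal θ ≠ ∞ := ENNReal.ofReal_ne_top
  have hcθ'0 : ENNReal.ofReal (1 - θ) ≠ 0 := by
    simp [ENNReal.ofReal_eq_zero, not_le]; linarith
  have hcθ't : ENNReal.ofReal (1 - θ) ≠ ∞ := ENNReal.ofReal_ne_top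
  set Q := Measure.map f P with hQ
  haveI : IsProbabilityMeasure Q := Measure.isProbabilityMeasure_map hf.aemeasurable
  set A := ENNReal.ofReal θ • m' with hA
  set B := ENNReal.ofReal (1 - θ) • ν' with hB
  haveI : IsFiniteMeasure A := ⟨by
    rw [hA]; simp only [Measure.smul_apply, smul_eq_mul, measure_univ, mul_one]
    exact ENNReal.ofReal_lt_top⟩
  haveI : IsFiniteMeasure B := ⟨by
    rw [hB]; simp only [Measure.smul_apply, smul_eq_mul, measure_univ, mul_one]
    exact ENNReal.ofReal_lt_top⟩
  have hAQ : A ≪ Q := by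
    rw [h]; intro s hs
    rw [Measure.add_apply] at hs
    exact (add_eq_zero.mp hs).1
  have hBQ : B ≪ Q := by
    rw [h]; intro s hs
    rw [Measure.add_apply] at hs
    exact (add_eq_zero.mp hs).2
  set gA := A.rnDeriv Q with hgAdef
  set gB := B.rnDeriv Q with hgBdef
  have hgAm : Measurable gA := Measure.measurable_rnDeriv A Q
  have hgBm : Measurable gB := Measure.measurable_rnDeriv B Q
  have hgA : Q.withDensity gA = A := Measure.withDensity_rnDeriv_eq A Q hAQ
  have hgB : Q.withDensity gB = B := Measure.withDensity_rnDeriv_eq B Q hBQ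
  have hmapwd : ∀ g : X → ℝ≥0∞, Measurable g →
      Measure.map f (P.withDensity (fun x => g (f x))) = Q.withDensity g := by
    intro g hg
    ext s hs
    rw [Measure.map_apply (by fun_prop) hs, withDensity_apply _ (hf hs),
      withDensity_apply _ hs, hQ, setLIntegral_map hs hg hf]
  set N₀ := P.withDensity (fun x => gA (f x)) with hN₀
  set N₀' := P.withDensity (fun x => gB (f x)) with hN₀'
  have hmapA : Measure.map f N₀ = A := by rw [hN₀, hmapwd gA hgAm, hgA]
  have hmapB : Measure.map f N₀' = B := by rw [hN₀', hmapwd gB hgBm, hgB]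
  have hone : (fun x => gA x + gB x) =ᵐ[Q] fun _ => 1 := by
    have hQ1 : Q = Q.withDensity (fun x => gA x + gB x) := by
      have : (fun x => gA x + gB x) = gA + gB := rfl
      rw [this, withDensity_add_left hgAm gB, hgA, hgB, ← h, hQ]
    have h1 : (fun x => gA x + gB x) =ᵐ[Q] Q.rnDeriv Q :=
      Measure.eq_rnDeriv (μ := Q) (hgAm.add hgBm) Measure.MutuallySingular.zero_left
        (by rw [zero_add, ← hQ1])
    exact h1.trans (Measure.rnDeriv_self Q)
  have honeP : (fun x => gA (f x) + gB (f x)) =ᵐ[P] fun _ => 1 := by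
    have hE : MeasurableSet {x | ¬ gA x + gB x = 1} :=
      ((hgAm.add hgBm) (measurableSet_singleton 1)).compl
    rw [Filter.EventuallyEq, ae_iff] at hone ⊢
    have hset : {x | ¬ (fun x => gA (f x) + gB (f x)) x = (fun _ => (1:ℝ≥0∞)) x}
        = f ⁻¹' {x | ¬ gA x + gB x = 1} := rfl
    rw [hset, ← Measure.map_apply hf hE, ← hQ]
    exact hone
  have hsum : N₀ + N₀' = P := by
    have h1 : N₀ + N₀' = P.withDensity (fun x => gA (f x) + gB (f x)) := by
      have : (fun x => gA (f x) + gB (f x))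
          = (fun x => gA (f x)) + (fun x => gB (f x)) := rfl
      rw [hN₀, hN₀', this, withDensity_add_left (show Measurable fun x => gA (f x) from hgAm.comp hf) _]
    rw [h1, withDensity_congr_ae honeP,
      show (fun _ : X => (1:ℝ≥0∞)) = 1 from rfl, withDensity_one]
  have hN₀univ : N₀ univ = ENNReal.ofReal θ := by
    have : N₀ univ = (Measure.map f N₀) univ := by
      rw [Measure.map_apply hf MeasurableSet.univ, preimage_univ]
    rw [this, hmapA, hA]
    simp [measure_univ]
  have hN₀'univ : N₀' univ = ENNReal.ofReal (1 - θ) := by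
    have : N₀' univ = (Measure.map f N₀') univ := by
      rw [Measure.map_apply hf MeasurableSet.univ, preimage_univ]
    rw [this, hmapB, hB]
    simp [measure_univ]
  refine ⟨(ENNReal.ofReal θ)⁻¹ • N₀, (ENNReal.ofReal (1 - θ))⁻¹ • N₀', ?_, ?_, ?_, ?_, ?_⟩
  · exact ⟨by simp only [Measure.smul_apply, smul_eq_mul, hN₀univ,
      ENNReal.inv_mul_cancel hcθ0 hcθt]⟩
  · exact ⟨by simp only [Measure.smul_apply, smul_eq_mul, hN₀'univ,
      ENNReal.inv_mul_cancel hcθ'0 hcθ't]⟩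
  · rw [Measure.map_smul, hmapA, hA, smul_smul, ENNReal.inv_mul_cancel hcθ0 hcθt, one_smul]
  · rw [Measure.map_smul, hmapB, hB, smul_smul, ENNReal.inv_mul_cancel hcθ'0 hcθ't, one_smul]
  · rw [smul_smul, ENNReal.mul_inv_cancel hcθ0 hcθt, one_smul,
      smul_smul, ENNReal.mul_inv_cancel hcθ'0 hcθ't, one_smul]
    exact hsum

end AuxHelpers

namespace NUE

variable {X : Type*} [MetricSpace X] [MeasurableSpace X] [BorelSpace X] (S : NUE X)

lemma tau_eq_iff {k ℓ : ℕ} (hk : 1 ≤ k) (hℓ : 1 ≤ ℓ) (x : X) :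
    S.tau k x = ℓ ↔ (seqComp S.T k ℓ x ∈ S.Y (k + ℓ) ∧
      ∀ j, 1 ≤ j → j < ℓ → seqComp S.T k j x ∉ S.Y (k + j)) := by
  have hret := S.retFin k hk x
  constructor
  · intro h
    refine ⟨by rw [← h]; exact hret.2, ?_⟩
    intro j hj hjl hmem
    have hmem' : j ∈ {n | 1 ≤ n ∧ seqComp S.T k n x ∈ S.Y (k + n)} := ⟨hj, hmem⟩
    have h2 : S.tau k x ≤ j := Nat.sInf_le hmem'
    have h3 : S.tau k x = ℓ := h
    omega
  · rintro ⟨h1, h2⟩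
    have hmem : ℓ ∈ {n | 1 ≤ n ∧ seqComp S.T k n x ∈ S.Y (k + n)} := ⟨hℓ, h1⟩
    have hle : S.tau k x ≤ ℓ := Nat.sInf_le hmem
    by_contra hne
    exact h2 _ hret.1 (lt_of_le_of_ne hle hne) hret.2

lemma measurableSet_tau_eq {k : ℕ} (hk : 1 ≤ k) (ℓ : ℕ) :
    MeasurableSet {x : X | S.tau k x = ℓ} := by
  rcases Nat.eq_zero_or_pos ℓ with rfl | hℓ
  · have h0 : {x : X | S.tau k x = 0} = ∅ := by
      ext x
      simp only [mem_setOf_eq, mem_empty_iff_false, iff_false]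
      have h1 : 1 ≤ S.tau k x := (S.retFin k hk x).1
      omega
    rw [h0]; exact MeasurableSet.empty
  · have h0 : {x : X | S.tau k x = ℓ} = (seqComp S.T k ℓ ⁻¹' S.Y (k + ℓ)) ∩
        ⋂ (j : ℕ), ⋂ (_ : 1 ≤ j), ⋂ (_ : j < ℓ), (seqComp S.T k j ⁻¹' S.Y (k + j))ᶜ := by
      ext x
      simp only [mem_setOf_eq, mem_inter_iff, mem_preimage, mem_iInter, mem_compl_iff]
      exact S.tau_eq_iff hk hℓ x
    rw [h0]
    exact ((seqComp_measurable S.Tmeas k ℓ) (S.Ymeas _)).inter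
      (MeasurableSet.iInter fun j => MeasurableSet.iInter fun _ =>
        MeasurableSet.iInter fun _ => ((seqComp_measurable S.Tmeas k j) (S.Ymeas _)).compl)

lemma measurableSet_tau_ge {k : ℕ} (hk : 1 ≤ k) (n : ℕ) :
    MeasurableSet {x : X | n ≤ S.tau k x} := by
  have h0 : {x : X | n ≤ S.tau k x} = ⋃ (ℓ : ℕ), ⋃ (_ : n ≤ ℓ), {x : X | S.tau k x = ℓ} := by
    ext x
    simp only [mem_setOf_eq, mem_iUnion]
    exact ⟨fun h => ⟨S.tau k x, h, rfl⟩, fun ⟨ℓ, hℓ, he⟩ => he ▸ hℓ⟩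
  rw [h0]
  exact MeasurableSet.iUnion fun ℓ => MeasurableSet.iUnion fun _ => S.measurableSet_tau_eq hk ℓ

lemma hnk_nonneg {Ch : ℝ} (hCh : 0 ≤ Ch) (k n l : ℕ) : 0 ≤ S.hnk Ch k n l :=
  mul_nonneg hCh (Finset.sum_nonneg fun _ _ => ENNReal.toReal_nonneg)

lemma hnk_le {Ch : ℝ} (hCh : 0 ≤ Ch) {k ℓ j : ℕ} (hℓ : ℓ ≤ j) (t : ℕ) :
    S.hnk Ch (k + ℓ) (j - ℓ) t ≤ S.hnk Ch k j t := by
  unfold NUE.hnk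
  apply mul_le_mul_of_nonneg_left _ hCh
  have hcg : ∀ i ∈ Finset.range (j - ℓ + 1),
      S.hTail (k + ℓ + i) (j - ℓ + t - i) = S.hTail (k + (ℓ + i)) (j + t - (ℓ + i)) := by
    intro i hi
    simp only [Finset.mem_range] at hi
    congr 1
    · omega
    · omega
  rw [Finset.sum_congr rfl hcg]
  have hmap : ∑ i ∈ Finset.range (j - ℓ + 1), S.hTail (k + (ℓ + i)) (j + t - (ℓ + i))
      = ∑ i ∈ (Finset.range (j - ℓ + 1)).map (addLeftEmbedding ℓ),
          S.hTail (k + i) (j + t - i) := by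
    rw [Finset.sum_map]
    rfl
  rw [hmap]
  apply Finset.sum_le_sum_of_subset_of_nonneg
  · intro x hx
    simp only [Finset.mem_map, Finset.mem_range, addLeftEmbedding_apply] at hx
    obtain ⟨i, hi, rfl⟩ := hx
    simp only [Finset.mem_range]
    omega
  · intro i _ _
    exact ENNReal.toReal_nonneg

lemma regular_finsetSum {K₁ : ℝ} {κ : ℕ} {ι : Type*} (s : Finset ι) (w : ι → ℝ≥0∞)
    (μs : ι → Measure X) (hw : ∀ i ∈ s, w i ≠ ∞) (h : ∀ i ∈ s, S.Regular K₁ κ (μs i)) :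
    S.Regular K₁ κ (∑ i ∈ s, w i • μs i) := by
  intro l hl
  rw [restrict_finsetSum_smul, map_finsetSum_smul (seqComp_measurable S.Tmeas κ l)]
  exact LLBoundedBy.finsetSum s w _ hw (fun i hi => h i hi l hl)

lemma tailBound_finsetSum {κ : ℕ} {H : ℕ → ℝ} (hH : ∀ n, 0 ≤ H n) {ι : Type*}
    (s : Finset ι) (w : ι → ℝ≥0∞) (μs : ι → Measure X) (hws : ∑ i ∈ s, w i ≤ 1)
    (h : ∀ i ∈ s, S.TailBound κ (μs i) H) : S.TailBound κ (∑ i ∈ s, w i • μs i) H := by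
  intro n
  rw [Measure.finset_sum_apply]
  calc ∑ i ∈ s, (w i • μs i) {x | n ≤ S.tau κ x}
      = ∑ i ∈ s, w i * (μs i) {x | n ≤ S.tau κ x} := by
        simp [Measure.smul_apply, smul_eq_mul]
    _ ≤ ∑ i ∈ s, w i * ENNReal.ofReal (H n) :=
        Finset.sum_le_sum fun i hi => mul_le_mul_right (h i hi n) _
    _ = (∑ i ∈ s, w i) * ENNReal.ofReal (H n) := by rw [Finset.sum_mul]
    _ ≤ 1 * ENNReal.ofReal (H n) := mul_le_mul_left hws _
    _ = ENNReal.ofReal (H n) := one_mul _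

end NUE

theorem stmt18 {X : Type*} [MetricSpace X] [MeasurableSpace X] [BorelSpace X]
    (S : NUE X) (δ₀ : ℝ) (n₀ : ℕ) (hδ₀ : 0 < δ₀) (hn₀ : 1 ≤ n₀) (h5 : S.nu5 δ₀ n₀)
    (K₂ : ℝ) (hK₂ : (1 - S.lam⁻¹)⁻¹ * S.K < K₂)
    (K₁ : ℝ) (hK₁ : K₁ = S.K + S.lam⁻¹ * K₂)
    (Ch : ℝ) (hCh : Ch = 2 * Real.exp (K₂ * Metric.diam (univ : Set X)))
    -- θ is the constant from the one-step decomposition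
    (θ : ℝ) (hθmem : θ ∈ Ioo (0:ℝ) 1)
    (hθ : ∀ k, 1 ≤ k → ∀ ν₀ : Measure X, IsProbabilityMeasure ν₀ →
      LLBoundedBy (S.m k) (S.Y k) ν₀ K₂ → ∀ n : ℕ, n₀ ≤ n →
        ∃ ν' : Measure X, IsProbabilityMeasure ν' ∧
          Measure.map (seqComp S.T k n) ν₀ =
            ENNReal.ofReal θ • S.m (k + n) + ENNReal.ofReal (1 - θ) • ν' ∧
          S.Regular K₁ (k + n) ν' ∧ S.TailBound (k + n) ν' (S.hnk Ch k n))
    (k : ℕ) (hk : 1 ≤ k)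
    (μ : Measure X) (hμ : IsProbabilityMeasure μ) (r : ℕ → ℝ)
    (hr_anti : Antitone r) (hr1 : r 1 = 1) (hr0 : Tendsto r atTop (nhds 0))
    (hreg : S.Regular K₁ k μ) (htail : S.TailBound k μ r) :
    -- the decomposition `μ = Σ_{j≥n₀+1} α_j [θ μ_j + (1-θ) μ_j']`, where the index
    -- `j = n₀ + 1 + i` and `α_j = r (j - n₀) - r (j + 1 - n₀) = r (i+1) - r (i+2)`
    ∃ ν ν' : ℕ → Measure X,
      (∀ i, IsProbabilityMeasure (ν i) ∧ IsProbabilityMeasure (ν' i)) ∧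
      μ = Measure.sum (fun i =>
        ENNReal.ofReal (r (i + 1) - r (i + 2)) •
          (ENNReal.ofReal θ • ν i + ENNReal.ofReal (1 - θ) • ν' i)) ∧
      ∀ i : ℕ,
        Measure.map (seqComp S.T k (n₀ + 1 + i)) (ν i) = S.m (k + (n₀ + 1 + i)) ∧
        S.Regular K₁ (k + (n₀ + 1 + i))
          (Measure.map (seqComp S.T k (n₀ + 1 + i)) (ν' i)) ∧
        S.TailBound (k + (n₀ + 1 + i))
          (Measure.map (seqComp S.T k (n₀ + 1 + i)) (ν' i))
          (S.hnk Ch k (n₀ + 1 + i)) := by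
  classical
  have hθ0 : 0 < θ := hθmem.1
  have hθ1 : θ < 1 := hθmem.2
  have hlam1 : (0:ℝ) < 1 - S.lam⁻¹ := by
    have h2 : S.lam⁻¹ < 1 := inv_lt_one_of_one_lt₀ S.hlam
    linarith
  have hK2pos : 0 < K₂ := lt_trans (mul_pos (inv_pos.mpr hlam1) S.hK) hK₂
  have hK12 : K₁ ≤ K₂ := by
    have h2 : S.K < (1 - S.lam⁻¹) * K₂ := by
      have := (inv_mul_lt_iff₀ hlam1).mp hK₂
      linarith
    have hl0 : 0 ≤ S.lam⁻¹ := inv_nonneg.mpr (le_of_lt (lt_trans one_pos S.hlam))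
    rw [hK₁]
    nlinarith
  have hChpos : 0 < Ch := by rw [hCh]; positivity
  have hr_nonneg : ∀ n, 0 ≤ r n := fun n =>
    le_of_tendsto hr0 (eventually_atTop.mpr ⟨n, fun m hm => hr_anti hm⟩)
  have hτ1 : ∀ x, 1 ≤ S.tau k x := fun x => (S.retFin k hk x).1
  have hfmeas : ∀ j, Measurable (seqComp S.T k j) := fun j => seqComp_measurable S.Tmeas k j
  have hAmeas : ∀ ℓ, MeasurableSet {x : X | S.tau k x = ℓ} := fun ℓ => S.measurableSet_tau_eq hk ℓ
  have hGmeas : ∀ n, MeasurableSet {x : X | n ≤ S.tau k x} := fun n => S.measurableSet_tau_ge hk n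
  set R : ℕ → ℝ := fun ℓ => (μ {x | ℓ ≤ S.tau k x}).toReal with hRdef
  have hRanti : ∀ ℓ, R (ℓ + 1) ≤ R ℓ := fun ℓ =>
    ENNReal.toReal_mono (measure_ne_top _ _) (measure_mono fun x hx => le_trans (Nat.le_succ ℓ) hx)
  have hR0 : ∀ ℓ, 0 ≤ R ℓ := fun ℓ => ENNReal.toReal_nonneg
  have hR1' : ∀ ℓ, R ℓ ≤ 1 := fun ℓ => by
    calc R ℓ = (μ {x | ℓ ≤ S.tau k x}).toReal := rfl
      _ ≤ (1 : ℝ≥0∞).toReal := ENNReal.toReal_mono ENNReal.one_ne_top prob_le_one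
      _ = 1 := by simp
  have hR1 : R 1 = 1 := by
    have huniv : {x : X | 1 ≤ S.tau k x} = univ := eq_univ_of_forall hτ1
    rw [hRdef]
    simp only [huniv, measure_univ, ENNReal.toReal_one]
  have hRr : ∀ ℓ, R ℓ ≤ r ℓ := fun ℓ =>
    ENNReal.toReal_le_of_le_ofReal (hr_nonneg ℓ) (htail ℓ)
  set a : ℕ → ℕ → ℝ := fun n ℓ => max (min (R ℓ) (r n) - max (R (ℓ + 1)) (r (n + 1))) 0 with hadef
  have ha0 : ∀ n ℓ, 0 ≤ a n ℓ := fun n ℓ => le_max_right _ _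
  have ha_le_p : ∀ n ℓ, a n ℓ ≤ R ℓ - R (ℓ + 1) := by
    intro n ℓ
    apply max_le _ (by linarith [hRanti ℓ])
    have h1 : min (R ℓ) (r n) ≤ R ℓ := min_le_left _ _
    have h2 : R (ℓ + 1) ≤ max (R (ℓ + 1)) (r (n + 1)) := le_max_left _ _
    linarith
  have ha_le_c : ∀ n ℓ, a n ℓ ≤ r n - r (n + 1) := by
    intro n ℓ
    apply max_le _ (by linarith [hr_anti (Nat.le_succ n)])
    have h1 : min (R ℓ) (r n) ≤ r n := min_le_right _ _
    have h2 : r (n + 1) ≤ max (R (ℓ + 1)) (r (n + 1)) := le_max_right _ _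
    linarith
  have ha_zero0 : ∀ n, 1 ≤ n → a n 0 = 0 := by
    intro n hn
    apply max_eq_right
    have h1 : min (R 0) (r n) ≤ r n := min_le_right _ _
    have h2 : r n ≤ 1 := hr1 ▸ hr_anti hn
    have h3 : (1:ℝ) ≤ max (R 1) (r (n + 1)) := hR1 ▸ le_max_left _ _
    linarith
  have ha_zero_big : ∀ n ℓ, 1 ≤ n → n < ℓ → a n ℓ = 0 := by
    intro n ℓ hn hnℓ
    apply max_eq_right
    have h1 : min (R ℓ) (r n) ≤ R ℓ := min_le_left _ _
    have h2 : R ℓ ≤ r ℓ := hRr ℓ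
    have h3 : r ℓ ≤ r (n + 1) := hr_anti (by omega)
    have h4 : r (n + 1) ≤ max (R (ℓ + 1)) (r (n + 1)) := le_max_right _ _
    linarith
  have hsum_row : ∀ n, 1 ≤ n → ∑ ℓ ∈ Finset.Icc 1 n, a n ℓ = r n - r (n + 1) := by
    intro n hn
    have hclip := clip_sum hRanti (r n) (r (n + 1)) n
    have e1 : min (R 1) (r n) = r n := min_eq_right (by rw [hR1]; exact hr1 ▸ hr_anti hn)
    have e2 : max (r n) (r (n + 1)) = r n := max_eq_left (hr_anti (Nat.le_succ n))
    have e3 : min (R (n + 1)) (r n) = R (n + 1) :=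
      min_eq_left ((hRr (n + 1)).trans (hr_anti (Nat.le_succ n)))
    have e4 : max (R (n + 1)) (r (n + 1)) = r (n + 1) := max_eq_right (hRr (n + 1))
    rw [e1, e2, e3, e4] at hclip
    rw [← Finset.Ico_add_one_right_eq_Icc, Finset.sum_Ico_eq_sum_range]
    rw [← hclip]
    exact Finset.sum_congr rfl fun i _ => by rw [add_comm 1 i]
  have hsum_col : ∀ ℓ, 1 ≤ ℓ → HasSum (fun i : ℕ => a (i + 1) ℓ) (R ℓ - R (ℓ + 1)) := by
    intro ℓ hℓ
    rw [hasSum_iff_tendsto_nat_of_nonneg (fun i => ha0 _ _)]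
    have hps : ∀ Nn : ℕ, ∑ i ∈ Finset.range Nn, a (i + 1) ℓ
        = R ℓ - max (min (r (Nn + 1)) (R ℓ)) (R (ℓ + 1)) := by
      intro Nn
      have hterm : ∀ i, a (i + 1) ℓ
          = max (min (r (i + 1)) (R ℓ) - max (r (i + 2)) (R (ℓ + 1))) 0 := by
        intro i
        show max (min (R ℓ) (r (i + 1)) - max (R (ℓ + 1)) (r (i + 1 + 1))) 0 = _
        rw [min_comm (R ℓ) (r (i + 1)), max_comm (R (ℓ + 1)) (r (i + 1 + 1))]
      have hclip := clip_sum (u := r) (fun m => hr_anti (Nat.le_succ m)) (R ℓ) (R (ℓ + 1)) Nn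
      rw [Finset.sum_congr rfl (fun i _ => hterm i), hclip]
      have e1 : min (r 1) (R ℓ) = R ℓ := min_eq_right (by rw [hr1]; exact hR1' ℓ)
      have e2 : max (R ℓ) (R (ℓ + 1)) = R ℓ := max_eq_left (hRanti ℓ)
      rw [e1, e2]
    have h1 : Tendsto (fun Nn : ℕ => r (Nn + 1)) atTop (nhds 0) :=
      hr0.comp (tendsto_add_atTop_nat 1)
    have h2 : Continuous (fun t : ℝ => R ℓ - max (min t (R ℓ)) (R (ℓ + 1))) := by
      fun_prop
    have h3 : Tendsto (fun Nn : ℕ => R ℓ - max (min (r (Nn + 1)) (R ℓ)) (R (ℓ + 1))) atTop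
        (nhds (R ℓ - max (min 0 (R ℓ)) (R (ℓ + 1)))) := (h2.tendsto 0).comp h1
    have e0 : R ℓ - max (min 0 (R ℓ)) (R (ℓ + 1)) = R ℓ - R (ℓ + 1) := by
      rw [min_eq_left (hR0 ℓ), max_eq_right (hR0 (ℓ + 1))]
    rw [e0] at h3
    exact Tendsto.congr (fun Nn => (hps Nn).symm) h3
  have hp_fin : ∀ ℓ, μ {x : X | S.tau k x = ℓ} ≠ ∞ := fun ℓ => measure_ne_top _ _
  have hptoReal : ∀ ℓ, R ℓ - R (ℓ + 1) = (μ {x : X | S.tau k x = ℓ}).toReal := by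
    intro ℓ
    have hset : {x : X | ℓ ≤ S.tau k x}
        = {x : X | S.tau k x = ℓ} ∪ {x : X | ℓ + 1 ≤ S.tau k x} := by
      ext x; simp only [mem_setOf_eq, mem_union]; omega
    have hdisj : Disjoint {x : X | S.tau k x = ℓ} {x : X | ℓ + 1 ≤ S.tau k x} := by
      rw [Set.disjoint_left]
      intro x h1 h2
      simp only [mem_setOf_eq] at h1 h2
      omega
    have hms : μ {x : X | ℓ ≤ S.tau k x}
        = μ {x : X | S.tau k x = ℓ} + μ {x : X | ℓ + 1 ≤ S.tau k x} := by
      rw [hset, measure_union hdisj (hGmeas (ℓ + 1))]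
    show (μ {x | ℓ ≤ S.tau k x}).toReal - (μ {x | ℓ + 1 ≤ S.tau k x}).toReal = _
    rw [hms, ENNReal.toReal_add (hp_fin ℓ) (measure_ne_top _ _)]
    ring
  set σm : ℕ → Measure X := fun ℓ =>
    (μ {x : X | S.tau k x = ℓ})⁻¹ • μ.restrict {x : X | S.tau k x = ℓ} with hσdef
  -- the component construction
  have main : ∀ i ℓ : ℕ, ∃ MN MN' : Measure X,
      (IsProbabilityMeasure MN ∧ IsProbabilityMeasure MN' ∧
        Measure.map (seqComp S.T k (n₀ + 1 + i)) MN = S.m (k + (n₀ + 1 + i)) ∧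
        S.Regular K₁ (k + (n₀ + 1 + i)) (Measure.map (seqComp S.T k (n₀ + 1 + i)) MN') ∧
        S.TailBound (k + (n₀ + 1 + i)) (Measure.map (seqComp S.T k (n₀ + 1 + i)) MN')
          (S.hnk Ch k (n₀ + 1 + i))) ∧
      (1 ≤ ℓ → ℓ ≤ i + 1 → μ {x : X | S.tau k x = ℓ} ≠ 0 →
        ENNReal.ofReal θ • MN + ENNReal.ofReal (1 - θ) • MN' = σm ℓ) := by
    intro i ℓ
    haveI := S.mprob (k + (n₀ + 1 + i))
    by_cases hcase : 1 ≤ ℓ ∧ ℓ ≤ i + 1 ∧ μ {x : X | S.tau k x = ℓ} ≠ 0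
    · obtain ⟨hℓ1, hℓi, hpne⟩ := hcase
      haveI hσprob : IsProbabilityMeasure (σm ℓ) := by
        constructor
        rw [hσdef]
        simp only [Measure.smul_apply, smul_eq_mul,
          Measure.restrict_apply MeasurableSet.univ, univ_inter]
        exact ENNReal.inv_mul_cancel hpne (hp_fin ℓ)
      haveI hν₀prob : IsProbabilityMeasure (Measure.map (seqComp S.T k ℓ) (σm ℓ)) :=
        Measure.isProbabilityMeasure_map (hfmeas ℓ).aemeasurable
      have hLL : LLBoundedBy (S.m (k + ℓ)) (S.Y (k + ℓ))
          (Measure.map (seqComp S.T k ℓ) (σm ℓ)) K₂ := by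
        have h1 := hreg ℓ hℓ1
        have h2 : Measure.map (seqComp S.T k ℓ) (σm ℓ)
            = (μ {x : X | S.tau k x = ℓ})⁻¹ •
              Measure.map (seqComp S.T k ℓ) (μ.restrict {x | S.tau k x = ℓ}) := by
          rw [hσdef]
          simp only []
          rw [Measure.map_smul]
        rw [h2]
        exact (h1.smul _ (ENNReal.inv_ne_top.mpr hpne)).mono hK12
      obtain ⟨ν'', hν''prob, hmapeq, hν''reg, hν''tail⟩ :=
        hθ (k + ℓ) (by omega) _ hν₀prob hLL (n₀ + 1 + i - ℓ) (by omega)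
      have hidx : k + ℓ + (n₀ + 1 + i - ℓ) = k + (n₀ + 1 + i) := by omega
      rw [hidx] at hmapeq hν''reg hν''tail
      have hcompf : seqComp S.T k (n₀ + 1 + i)
          = (seqComp S.T (k + ℓ) (n₀ + 1 + i - ℓ)) ∘ (seqComp S.T k ℓ) := by
        conv_lhs => rw [show n₀ + 1 + i = ℓ + (n₀ + 1 + i - ℓ) by omega]
        exact seqComp_add S.T k ℓ (n₀ + 1 + i - ℓ)
      have hcomp : Measure.map (seqComp S.T k (n₀ + 1 + i)) (σm ℓ)
          = ENNReal.ofReal θ • S.m (k + (n₀ + 1 + i)) + ENNReal.ofReal (1 - θ) • ν'' := by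
        rw [hcompf, ← Measure.map_map (seqComp_measurable S.Tmeas _ _) (hfmeas ℓ)]
        exact hmapeq
      obtain ⟨MN, MN', hN1, hN2, hm1, hm2, hsp⟩ :=
        split_component (hfmeas (n₀ + 1 + i)) (σm ℓ) (S.m (k + (n₀ + 1 + i))) ν'' hθ0 hθ1 hcomp
      refine ⟨MN, MN', ⟨hN1, hN2, hm1, ?_, ?_⟩, fun _ _ _ => hsp⟩
      · rw [hm2]; exact hν''reg
      · rw [hm2]
        intro n
        exact (hν''tail n).trans (ENNReal.ofReal_le_ofReal
          (S.hnk_le hChpos.le (by omega : ℓ ≤ n₀ + 1 + i) n))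
    · haveI := S.mprob k
      have hLL1 : LLBoundedBy (S.m k) (S.Y k) (S.m k) K₂ := by
        refine ⟨fun _ => 1, fun _ => one_pos.le, measurable_const, by simp, ?_⟩
        intro y _ y' _
        have h1 : 1 ≤ Real.exp (K₂ * dist y y') :=
          Real.one_le_exp (mul_nonneg hK2pos.le dist_nonneg)
        simpa using h1
      obtain ⟨ν'', hν''prob, hmapeq, hν''reg, hν''tail⟩ :=
        hθ k hk (S.m k) (S.mprob k) hLL1 (n₀ + 1 + i) (by omega)
      obtain ⟨MN, MN', hN1, hN2, hm1, hm2, hsp⟩ :=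
        split_component (hfmeas (n₀ + 1 + i)) (S.m k) (S.m (k + (n₀ + 1 + i))) ν'' hθ0 hθ1 hmapeq
      exact ⟨MN, MN', ⟨hN1, hN2, hm1, by rw [hm2]; exact hν''reg, by rw [hm2]; exact hν''tail⟩,
        fun h1 h2 h3 => absurd ⟨h1, h2, h3⟩ hcase⟩
  choose MN MN' hGOOD hEQ using main
  set wfun : ℕ → ℕ → ℝ≥0∞ :=
    fun i ℓ => ENNReal.ofReal (a (i + 1) ℓ / (r (i + 1) - r (i + 2))) with hwdef
  set νm : ℕ → Measure X := fun i => if 0 < r (i + 1) - r (i + 2) then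
      ∑ ℓ ∈ Finset.Icc 1 (i + 1), wfun i ℓ • MN i ℓ else MN i 0 with hνdef
  set νm' : ℕ → Measure X := fun i => if 0 < r (i + 1) - r (i + 2) then
      ∑ ℓ ∈ Finset.Icc 1 (i + 1), wfun i ℓ • MN' i ℓ else MN' i 0 with hν'def
  have hwsum : ∀ i, 0 < r (i + 1) - r (i + 2) →
      ∑ ℓ ∈ Finset.Icc 1 (i + 1), wfun i ℓ = 1 := by
    intro i hci
    rw [hwdef]
    simp only []
    rw [← ENNReal.ofReal_sum_of_nonneg (fun ℓ _ => div_nonneg (ha0 _ _) hci.le),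
      ← Finset.sum_div]
    rw [show (∑ ℓ ∈ Finset.Icc 1 (i + 1), a (i + 1) ℓ) = r (i + 1) - r (i + 2) from
      hsum_row (i + 1) (by omega)]
    rw [div_self hci.ne']
    exact ENNReal.ofReal_one
  have hprob : ∀ i, IsProbabilityMeasure (νm i) ∧ IsProbabilityMeasure (νm' i) := by
    intro i
    have hP : ∀ (M : ℕ → ℕ → Measure X), (∀ i ℓ, IsProbabilityMeasure (M i ℓ)) →
        IsProbabilityMeasure (if 0 < r (i + 1) - r (i + 2) then
          ∑ ℓ ∈ Finset.Icc 1 (i + 1), wfun i ℓ • M i ℓ else M i 0) := by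
      intro M hM
      split_ifs with hci
      · constructor
        rw [Measure.finset_sum_apply]
        have he : ∀ ℓ ∈ Finset.Icc 1 (i + 1), (wfun i ℓ • M i ℓ) univ = wfun i ℓ := by
          intro ℓ _
          simp [Measure.smul_apply, (hM i ℓ).measure_univ]
        rw [Finset.sum_congr rfl he]
        exact hwsum i hci
      · exact hM i 0
    rw [hνdef, hν'def]
    exact ⟨hP MN (fun i ℓ => (hGOOD i ℓ).1), hP MN' (fun i ℓ => (hGOOD i ℓ).2.1)⟩
  have hmapν : ∀ i, Measure.map (seqComp S.T k (n₀ + 1 + i)) (νm i)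
      = S.m (k + (n₀ + 1 + i)) := by
    intro i
    rw [hνdef]
    simp only []
    split_ifs with hci
    · rw [map_finsetSum_smul (hfmeas _)]
      have he : ∀ ℓ ∈ Finset.Icc 1 (i + 1),
          wfun i ℓ • Measure.map (seqComp S.T k (n₀ + 1 + i)) (MN i ℓ)
            = wfun i ℓ • S.m (k + (n₀ + 1 + i)) := by
        intro ℓ _
        rw [(hGOOD i ℓ).2.2.1]
      rw [Finset.sum_congr rfl he, ← Finset.sum_smul, hwsum i hci, one_smul]
    · exact (hGOOD i 0).2.2.1
  have hmapν' : ∀ i, Measure.map (seqComp S.T k (n₀ + 1 + i)) (νm' i)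
      = if 0 < r (i + 1) - r (i + 2) then ∑ ℓ ∈ Finset.Icc 1 (i + 1),
          wfun i ℓ • Measure.map (seqComp S.T k (n₀ + 1 + i)) (MN' i ℓ)
        else Measure.map (seqComp S.T k (n₀ + 1 + i)) (MN' i 0) := by
    intro i
    rw [hν'def]
    simp only []
    split_ifs with hci
    · rw [map_finsetSum_smul (hfmeas _)]
    · rfl
  have hregν' : ∀ i, S.Regular K₁ (k + (n₀ + 1 + i))
      (Measure.map (seqComp S.T k (n₀ + 1 + i)) (νm' i)) := by
    intro i
    rw [hmapν' i]
    split_ifs with hci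
    · exact S.regular_finsetSum _ _ _ (fun ℓ _ => ENNReal.ofReal_ne_top)
        (fun ℓ _ => (hGOOD i ℓ).2.2.2.1)
    · exact (hGOOD i 0).2.2.2.1
  have htailν' : ∀ i, S.TailBound (k + (n₀ + 1 + i))
      (Measure.map (seqComp S.T k (n₀ + 1 + i)) (νm' i)) (S.hnk Ch k (n₀ + 1 + i)) := by
    intro i
    rw [hmapν' i]
    split_ifs with hci
    · exact S.tailBound_finsetSum (S.hnk_nonneg hChpos.le k _) _ _ _
        (le_of_eq (hwsum i hci)) (fun ℓ _ => (hGOOD i ℓ).2.2.2.2)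
    · exact (hGOOD i 0).2.2.2.2
  have hterm : ∀ i, ENNReal.ofReal (r (i + 1) - r (i + 2)) •
      (ENNReal.ofReal θ • νm i + ENNReal.ofReal (1 - θ) • νm' i)
      = ∑ ℓ ∈ Finset.Icc 1 (i + 1), ENNReal.ofReal (a (i + 1) ℓ) • σm ℓ := by
    intro i
    by_cases hci : 0 < r (i + 1) - r (i + 2)
    · rw [hνdef, hν'def]
      simp only []
      rw [if_pos hci, if_pos hci, Finset.smul_sum, Finset.smul_sum, ← Finset.sum_add_distrib,
        Finset.smul_sum]
      refine Finset.sum_congr rfl fun ℓ hℓ => ?_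
      obtain ⟨hℓ1, hℓ2⟩ := Finset.mem_Icc.mp hℓ
      rw [smul_comm (ENNReal.ofReal θ) (wfun i ℓ), smul_comm (ENNReal.ofReal (1 - θ)) (wfun i ℓ),
        ← smul_add, smul_smul]
      by_cases hp : μ {x : X | S.tau k x = ℓ} = 0
      · have haz : a (i + 1) ℓ = 0 := by
          have h1 := ha_le_p (i + 1) ℓ
          have h2 : R ℓ - R (ℓ + 1) = 0 := by rw [hptoReal ℓ, hp]; simp
          have h3 := ha0 (i + 1) ℓ
          linarith
        have hwz : wfun i ℓ = 0 := by
          rw [hwdef]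
          simp only []
          rw [haz]
          simp
        rw [hwz, haz]
        simp
      · rw [hEQ i ℓ hℓ1 hℓ2 hp]
        congr 1
        rw [hwdef]
        simp only []
        rw [← ENNReal.ofReal_mul hci.le]
        congr 1
        rw [mul_comm, div_mul_cancel₀ _ hci.ne']
    · have h0 : ENNReal.ofReal (r (i + 1) - r (i + 2)) = 0 := by
        rw [ENNReal.ofReal_eq_zero]
        linarith [not_lt.mp hci]
      rw [h0, zero_smul]
      symm
      refine Finset.sum_eq_zero fun ℓ _ => ?_
      have haz : a (i + 1) ℓ = 0 := by
        have h1 : a (i + 1) ℓ ≤ r (i + 1) - r (i + 2) := ha_le_c (i + 1) ℓ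
        have h2 := ha0 (i + 1) ℓ
        have h3 := not_lt.mp hci
        linarith
      rw [haz]
      simp
  refine ⟨νm, νm', hprob, ?_, fun i => ⟨hmapν i, hregν' i, htailν' i⟩⟩
  refine Measure.ext fun s hs => ?_
  rw [Measure.sum_apply _ hs]
  have hterm_s : ∀ i : ℕ, (ENNReal.ofReal (r (i + 1) - r (i + 2)) •
      (ENNReal.ofReal θ • νm i + ENNReal.ofReal (1 - θ) • νm' i)) s
      = ∑' ℓ : ℕ, ENNReal.ofReal (a (i + 1) ℓ) * σm ℓ s := by
    intro i
    have hvanish : ∀ ℓ ∉ Finset.Icc 1 (i + 1),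
        ENNReal.ofReal (a (i + 1) ℓ) * σm ℓ s = 0 := by
      intro ℓ hℓ
      rw [Finset.mem_Icc] at hℓ
      push_neg at hℓ
      have haz : a (i + 1) ℓ = 0 := by
        rcases Nat.eq_zero_or_pos ℓ with rfl | hℓ1
        · exact ha_zero0 (i + 1) (by omega)
        · exact ha_zero_big (i + 1) ℓ (by omega) (by omega)
      rw [haz]
      simp
    rw [hterm i, Measure.finset_sum_apply, tsum_eq_sum hvanish]
    exact Finset.sum_congr rfl fun ℓ _ => by
      simp [Measure.smul_apply, smul_eq_mul]
  calc μ s = ∑' ℓ : ℕ, μ (s ∩ {x : X | S.tau k x = ℓ}) := by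
        have hcover : s = ⋃ ℓ : ℕ, s ∩ {x : X | S.tau k x = ℓ} := by
          ext x
          simp only [mem_iUnion, mem_inter_iff, mem_setOf_eq]
          exact ⟨fun hx => ⟨S.tau k x, hx, rfl⟩, fun ⟨ℓ, hx, _⟩ => hx⟩
        have hdisj : Pairwise (Function.onFun Disjoint
            fun ℓ => s ∩ {x : X | S.tau k x = ℓ}) := by
          intro ℓ ℓ' hne
          simp only [Function.onFun]
          rw [Set.disjoint_left]
          rintro x ⟨_, h1⟩ ⟨_, h2⟩
          simp only [mem_setOf_eq] at h1 h2
          exact hne (h1.symm.trans h2)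
        conv_lhs => rw [hcover]
        exact measure_iUnion hdisj fun ℓ => hs.inter (hAmeas ℓ)
    _ = ∑' ℓ : ℕ, (∑' i : ℕ, ENNReal.ofReal (a (i + 1) ℓ)) * σm ℓ s := by
        refine tsum_congr fun ℓ => ?_
        rcases Nat.eq_zero_or_pos ℓ with rfl | hℓ1
        · have hempty : {x : X | S.tau k x = 0} = ∅ :=
            eq_empty_iff_forall_notMem.mpr fun x hx => by
              have h1 := hτ1 x
              simp only [mem_setOf_eq] at hx
              omega
          have h0 : μ (s ∩ {x : X | S.tau k x = 0}) = 0 := by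
            apply measure_mono_null inter_subset_right
            rw [hempty]
            exact measure_empty
          have hz : (fun i : ℕ => ENNReal.ofReal (a (i + 1) 0)) = fun _ => 0 := by
            funext i
            rw [ha_zero0 (i + 1) (by omega)]
            simp
          rw [h0, hz]
          simp
        · have hts : (∑' i : ℕ, ENNReal.ofReal (a (i + 1) ℓ))
              = μ {x : X | S.tau k x = ℓ} := by
            rw [← ENNReal.ofReal_tsum_of_nonneg (fun i => ha0 _ _) (hsum_col ℓ hℓ1).summable,
              (hsum_col ℓ hℓ1).tsum_eq, hptoReal ℓ, ENNReal.ofReal_toReal (hp_fin ℓ)]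
          rw [hts, hσdef]
          simp only [Measure.smul_apply, smul_eq_mul, Measure.restrict_apply hs]
          by_cases hp : μ {x : X | S.tau k x = ℓ} = 0
          · rw [hp]
            simp only [zero_mul]
            exact measure_mono_null inter_subset_right hp
          · rw [← mul_assoc, ENNReal.mul_inv_cancel hp (hp_fin ℓ), one_mul]
    _ = ∑' ℓ : ℕ, ∑' i : ℕ, ENNReal.ofReal (a (i + 1) ℓ) * σm ℓ s :=
        tsum_congr fun ℓ => (ENNReal.tsum_mul_right).symm
    _ = ∑' i : ℕ, ∑' ℓ : ℕ, ENNReal.ofReal (a (i + 1) ℓ) * σm ℓ s := ENNReal.tsum_comm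
    _ = ∑' i : ℕ, (ENNReal.ofReal (r (i + 1) - r (i + 2)) •
        (ENNReal.ofReal θ • νm i + ENNReal.ofReal (1 - θ) • νm' i)) s :=
        tsum_congr fun i => (hterm_s i).symm


end
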